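/- arXiv:2203.07468 — 4 statements merged into one kernel-verified Lean document; each statement's English description precedes it below -/
import Mathlib

section
/- Decay interaction bound: let N ≥ 1, s > 0, and suppose f, g : ℝ^N → ℝ satisfy 0 ≤ f(x) ≤ C/(1+|x|^{N+2s}) and 0 ≤ g(x) ≤ C/(1+|x|^{N+2s}) for some C > 0. Then for any p > 1 there exists C' > 0 such that for all z ∈ ℝ^N with |z| ≥ 1, ∫_{ℝ^N} f(y)^p g(y − z) dy ≤ C' |z|^{−(N+2s)}. -/
open MeasureTheory

lemma aux_one_add_rpow (α t : ℝ) (ht : 0 ≤ t) (hα : 0 ≤ α) :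
    (1 + t) ^ α ≤ 2 ^ α * (1 + t ^ α) := by
  have h1 : (1 + t) ^ α ≤ (2 * max 1 t) ^ α := by
    apply Real.rpow_le_rpow (by linarith) _ hα
    rcases le_total t 1 with h | h
    · simp [max_eq_left h]; linarith
    · rw [max_eq_right h]; linarith
  have h2 : (2 * max 1 t) ^ α = 2 ^ α * (max 1 t) ^ α := by
    rw [Real.mul_rpow (by norm_num) (le_max_of_le_left zero_le_one)]
  have h3 : (max 1 t) ^ α ≤ 1 + t ^ α := by
    rcases le_total t 1 with h | h
    · rw [max_eq_left h, Real.one_rpow]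
      have := Real.rpow_nonneg ht α; linarith
    · rw [max_eq_right h]
      have : (0:ℝ) ≤ 1 := zero_le_one; linarith [Real.rpow_nonneg ht α]
  calc (1 + t) ^ α ≤ 2 ^ α * (max 1 t) ^ α := by rw [← h2]; exact h1
    _ ≤ 2 ^ α * (1 + t ^ α) := by
        have : (0:ℝ) ≤ 2 ^ α := Real.rpow_nonneg (by norm_num) α
        nlinarith

/-- Decay interaction bound: `∫ f(y)^p g(y−z) dy ≤ C' |z|^{−(N+2s)}` for functions
with decay `C/(1+|x|^{N+2s})`. -/
theorem stmt5 (N : ℕ) (hN : 1 ≤ N) (s : ℝ) (hs : 0 < s)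
    (f g : EuclideanSpace ℝ (Fin N) → ℝ) (C : ℝ) (hC : 0 < C)
    (hfm : Measurable f) (hgm : Measurable g)
    (hf : ∀ x, 0 ≤ f x ∧ f x ≤ C / (1 + ‖x‖ ^ ((N : ℝ) + 2 * s)))
    (hg : ∀ x, 0 ≤ g x ∧ g x ≤ C / (1 + ‖x‖ ^ ((N : ℝ) + 2 * s)))
    (p : ℝ) (hp : 1 < p) :
    ∃ C' > 0, ∀ z : EuclideanSpace ℝ (Fin N), 1 ≤ ‖z‖ →
      ∫ y, (f y) ^ p * g (y - z) ≤ C' * ‖z‖ ^ (-((N : ℝ) + 2 * s)) := by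
  set α : ℝ := (N : ℝ) + 2 * s with hα_def
  have hα0 : 0 < α := by positivity
  have hαN : (N : ℝ) < α := by simp only [hα_def]; linarith
  set h : EuclideanSpace ℝ (Fin N) → ℝ := fun x => (1 + ‖x‖ ^ α)⁻¹ with hh_def
  have hden : ∀ x : EuclideanSpace ℝ (Fin N), (0:ℝ) < 1 + ‖x‖ ^ α := fun x => by
    have := Real.rpow_nonneg (norm_nonneg x) α; linarith
  have hhpos : ∀ x : EuclideanSpace ℝ (Fin N), 0 < h x := fun x => inv_pos.mpr (hden x)
  have hhle1 : ∀ x : EuclideanSpace ℝ (Fin N), h x ≤ 1 := fun x => by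
    rw [hh_def]
    have := hden x
    rw [inv_le_one_iff₀]; right
    have := Real.rpow_nonneg (norm_nonneg x) α; linarith
  have hhm : Measurable h := by
    apply Measurable.inv
    exact (measurable_const.add ((measurable_norm).pow_const α))
  -- integrability of h
  have hfinrank : (Module.finrank ℝ (EuclideanSpace ℝ (Fin N)) : ℝ) = (N : ℝ) := by
    simp [finrank_euclideanSpace_fin]
  have hint0 : Integrable (fun x : EuclideanSpace ℝ (Fin N) => (1 + ‖x‖) ^ (-α)) :=
    integrable_one_add_norm (by rw [hfinrank]; exact hαN)
  have hinth : Integrable h := by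
    refine (hint0.const_mul ((2:ℝ) ^ α)).mono' hhm.aestronglyMeasurable
      (Filter.Eventually.of_forall fun x => ?_)
    rw [Real.norm_eq_abs, abs_of_pos (hhpos x)]
    have key := aux_one_add_rpow α ‖x‖ (norm_nonneg x) hα0.le
    have h1 : (0:ℝ) < (1 + ‖x‖) ^ α := Real.rpow_pos_of_pos (by linarith [norm_nonneg x]) α
    rw [Real.rpow_neg (by linarith [norm_nonneg x])]
    show (1 + ‖x‖ ^ α)⁻¹ ≤ _
    rw [← div_eq_mul_inv, le_div_iff₀ h1, inv_mul_eq_div, div_le_iff₀ (hden x)]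
    linarith [key]
  -- pointwise bounds on f, g  vs h
  have hfb : ∀ x : EuclideanSpace ℝ (Fin N), f x ≤ C * h x := fun x => by
    have := (hf x).2
    rwa [div_eq_mul_inv] at this
  have hgb : ∀ x : EuclideanSpace ℝ (Fin N), g x ≤ C * h x := fun x => by
    have := (hg x).2
    rwa [div_eq_mul_inv] at this
  have hfpb : ∀ x : EuclideanSpace ℝ (Fin N), f x ^ p ≤ C ^ p * h x := fun x => by
    calc f x ^ p ≤ (C * h x) ^ p :=
          Real.rpow_le_rpow (hf x).1 (hfb x) (by linarith)
      _ = C ^ p * (h x) ^ p := Real.mul_rpow hC.le (hhpos x).le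
      _ ≤ C ^ p * h x := by
          have h1 : (h x) ^ p ≤ (h x) ^ (1:ℝ) :=
            Real.rpow_le_rpow_of_exponent_ge (hhpos x) (hhle1 x) (by linarith)
          rw [Real.rpow_one] at h1
          exact mul_le_mul_of_nonneg_left h1 (Real.rpow_nonneg hC.le p)
  set K : ℝ := C ^ (p + 1) * 2 ^ α with hK_def
  have hK0 : 0 < K := by positivity
  set I : ℝ := ∫ x : EuclideanSpace ℝ (Fin N), h x with hI_def
  have hI0 : 0 ≤ I := integral_nonneg fun x => (hhpos x).le
  refine ⟨K * (2 * I + 1), by positivity, fun z hz => ?_⟩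
  have hz0 : (0:ℝ) < ‖z‖ := by linarith
  have hzα : (0:ℝ) < ‖z‖ ^ α := Real.rpow_pos_of_pos hz0 α
  have hznegα : ‖z‖ ^ (-α) = (‖z‖ ^ α)⁻¹ := Real.rpow_neg hz0.le α
  have hznegα0 : (0:ℝ) ≤ ‖z‖ ^ (-α) := Real.rpow_nonneg hz0.le _
  -- key: for any y, if ‖z‖/2 ≤ ‖y‖ then h y ≤ 2^α * ‖z‖^(-α)
  have hkey : ∀ y : EuclideanSpace ℝ (Fin N), ‖z‖ / 2 ≤ ‖y‖ → h y ≤ 2 ^ α * ‖z‖ ^ (-α) := by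
    intro y hy
    have hy0 : (0:ℝ) < ‖y‖ := by linarith
    have h1 : (‖z‖ / 2) ^ α ≤ ‖y‖ ^ α :=
      Real.rpow_le_rpow (by positivity) hy (le_of_lt hα0)
    have h2 : (‖z‖ / 2) ^ α = ‖z‖ ^ α / 2 ^ α := Real.div_rpow hz0.le (by norm_num : (0:ℝ) ≤ 2) α
    have h3 : h y ≤ (‖y‖ ^ α)⁻¹ := by
      rw [hh_def]
      apply inv_anti₀ (Real.rpow_pos_of_pos hy0 α)
      linarith
    have h4 : (‖y‖ ^ α)⁻¹ ≤ ((‖z‖/2) ^ α)⁻¹ := by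
      apply inv_anti₀ (by rw [h2]; positivity) h1
    have h5 : ((‖z‖/2) ^ α)⁻¹ = 2 ^ α * ‖z‖ ^ (-α) := by
      rw [h2, hznegα]
      field_simp
    linarith
  -- pointwise majorant
  set M : EuclideanSpace ℝ (Fin N) → ℝ := fun y => K * ‖z‖ ^ (-α) * (h y + h (y - z)) with hM_def
  have hcomp : Integrable (fun y : EuclideanSpace ℝ (Fin N) => h (y - z)) := hinth.comp_sub_right z
  have hMint : Integrable M := ((hinth.add hcomp).const_mul _)
  have hCp1 : C ^ (p+1) = C ^ p * C := by
    rw [Real.rpow_add hC, Real.rpow_one]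
  have hpt : ∀ y : EuclideanSpace ℝ (Fin N), f y ^ p * g (y - z) ≤ M y := by
    intro y
    have hfy := hfpb y
    have hgy := hgb (y - z)
    have hfy0 : 0 ≤ f y ^ p := Real.rpow_nonneg (hf y).1 p
    have hgy0 : 0 ≤ g (y - z) := (hg (y-z)).1
    have hmul : f y ^ p * g (y - z) ≤ (C ^ p * h y) * (C * h (y - z)) :=
      mul_le_mul hfy hgy hgy0 (by positivity)
    rcases le_total (‖z‖ / 2) ‖y‖ with hc | hc
    · have hhy := hkey y hc
      have : (C ^ p * h y) * (C * h (y - z)) ≤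
          (C ^ p * (2 ^ α * ‖z‖ ^ (-α))) * (C * h (y - z)) := by
        apply mul_le_mul_of_nonneg_right _ (by positivity)
        exact mul_le_mul_of_nonneg_left hhy (by positivity)
      rw [hM_def]
      have hhy0 := (hhpos y).le
      have hhyz0 := (hhpos (y - z)).le
      have heq : (C ^ p * (2 ^ α * ‖z‖ ^ (-α))) * (C * h (y - z))
          = K * ‖z‖ ^ (-α) * h (y - z) := by
        rw [hK_def, hCp1]; ring
      calc f y ^ p * g (y - z) ≤ (C ^ p * (2 ^ α * ‖z‖ ^ (-α))) * (C * h (y - z)) :=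
            le_trans hmul this
        _ = K * ‖z‖ ^ (-α) * h (y - z) := heq
        _ ≤ K * ‖z‖ ^ (-α) * (h y + h (y - z)) := by
            apply mul_le_mul_of_nonneg_left (by linarith) (by positivity)
    · -- then ‖y - z‖ ≥ ‖z‖/2
      have hyz : ‖z‖ / 2 ≤ ‖y - z‖ := by
        have : ‖z‖ ≤ ‖y‖ + ‖y - z‖ := by
          calc ‖z‖ = ‖y - (y - z)‖ := by rw [sub_sub_cancel]
            _ ≤ ‖y‖ + ‖y - z‖ := norm_sub_le _ _
        linarith
      have hhyz := hkey (y - z) hyz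
      have : (C ^ p * h y) * (C * h (y - z)) ≤
          (C ^ p * h y) * (C * (2 ^ α * ‖z‖ ^ (-α))) := by
        apply mul_le_mul_of_nonneg_left _ (by positivity)
        exact mul_le_mul_of_nonneg_left hhyz hC.le
      rw [hM_def]
      have hhy0 := (hhpos y).le
      have hhyz0 := (hhpos (y - z)).le
      have heq : (C ^ p * h y) * (C * (2 ^ α * ‖z‖ ^ (-α)))
          = K * ‖z‖ ^ (-α) * h y := by
        rw [hK_def, hCp1]; ring
      calc f y ^ p * g (y - z) ≤ (C ^ p * h y) * (C * (2 ^ α * ‖z‖ ^ (-α))) :=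
            le_trans hmul this
        _ = K * ‖z‖ ^ (-α) * h y := heq
        _ ≤ K * ‖z‖ ^ (-α) * (h y + h (y - z)) := by
            apply mul_le_mul_of_nonneg_left (by linarith) (by positivity)
  -- integrability of the integrand
  have hfgm : Measurable (fun y : EuclideanSpace ℝ (Fin N) => f y ^ p * g (y - z)) := by
    apply Measurable.mul
    · exact hfm.pow_const p
    · exact hgm.comp (measurable_id.sub measurable_const)
  have hfgint : Integrable (fun y : EuclideanSpace ℝ (Fin N) => f y ^ p * g (y - z)) := by
    refine hMint.mono' hfgm.aestronglyMeasurable (Filter.Eventually.of_forall fun y => ?_)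
    rw [Real.norm_eq_abs, abs_of_nonneg (mul_nonneg (Real.rpow_nonneg (hf y).1 p) (hg (y-z)).1)]
    exact hpt y
  calc ∫ y, f y ^ p * g (y - z) ≤ ∫ y, M y := integral_mono hfgint hMint hpt
    _ = K * ‖z‖ ^ (-α) * (I + I) := by
        rw [hM_def]
        simp only []
        rw [MeasureTheory.integral_const_mul, integral_add hinth hcomp]
        congr 2
        exact integral_sub_right_eq_self h z
    _ ≤ K * (2 * I + 1) * ‖z‖ ^ (-α) := by nlinarith
end

section
/- Lower bound for the interaction integral: let N ≥ 1, s > 0, p > 1 with p(N+2s) > N, and define f(x) = 1/(1 + |x|^{N+2s}). Then there exists c > 0 such that for all z ∈ ℝ^N with |z| ≥ 2, ∫_{ℝ^N} f(y)^p f(y − z) dy ≥ c |z|^{−(N+2s)}. -/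
open MeasureTheory Metric

/-!
The integrand is bounded by `f(y)^p ≲ (1 + ‖y‖)^{-(N+2s)p}`, which is integrable because
`(N+2s)p > N`. On the unit ball `f(y)^p ≥ 2^{-p}`, and since `‖y - z‖ ≤ 2‖z‖` there once `‖z‖ ≥ 1`,
also `f(y - z) ≥ (1 + 2^{N+2s})⁻¹ ‖z‖^{-(N+2s)}`; integrating over the ball gives the bound.
-/

noncomputable def decay {E : Type*} [NormedAddCommGroup E] (α : ℝ) (x : E) : ℝ :=
  (1 + ‖x‖ ^ α)⁻¹

section Pointwise

variable {E : Type*} [NormedAddCommGroup E] {α p : ℝ}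

lemma decay_pos (x : E) : 0 < decay α x := by
  unfold decay; positivity

lemma decay_le_one (x : E) : decay α x ≤ 1 :=
  inv_le_one_of_one_le₀ (le_add_of_nonneg_right (Real.rpow_nonneg (norm_nonneg x) α))

lemma decay_rpow_mul_decay_nonneg (x y : E) : 0 ≤ decay α x ^ p * decay α y :=
  mul_nonneg (Real.rpow_nonneg (decay_pos x).le p) (decay_pos y).le

lemma one_add_rpow_le_two_rpow_mul {t : ℝ} (ht : 0 ≤ t) (hα : 0 ≤ α) :
    (1 + t) ^ α ≤ 2 ^ α * (1 + t ^ α) := by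
  have hmax : 1 + t ≤ 2 * max 1 t := by
    rcases le_total t 1 with h | h <;> simp [h] <;> linarith
  have hmax_rpow : max 1 t ^ α ≤ 1 + t ^ α := by
    rcases le_total t 1 with h | h
    · simp [max_eq_left h, Real.rpow_nonneg ht α]
    · simp [max_eq_right h]
  calc (1 + t) ^ α ≤ (2 * max 1 t) ^ α := Real.rpow_le_rpow (by positivity) hmax hα
    _ = 2 ^ α * max 1 t ^ α := Real.mul_rpow zero_le_two (by positivity)
    _ ≤ 2 ^ α * (1 + t ^ α) := by gcongr

lemma decay_le_two_rpow_mul (hα : 0 ≤ α) (x : E) :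
    decay α x ≤ 2 ^ α * (1 + ‖x‖) ^ (-α) := by
  have hx : 0 < 1 + ‖x‖ := by positivity
  rw [Real.rpow_neg hx.le, ← div_eq_mul_inv, decay, le_div_iff₀ (by positivity),
    inv_mul_le_iff₀ (by positivity), mul_comm]
  exact one_add_rpow_le_two_rpow_mul (norm_nonneg x) hα

lemma decay_rpow_le (hα : 0 ≤ α) (hp : 0 ≤ p) (x : E) :
    decay α x ^ p ≤ (2 ^ α) ^ p * (1 + ‖x‖) ^ (-(α * p)) := by
  have hx : 0 ≤ 1 + ‖x‖ := by positivity
  calc decay α x ^ p ≤ (2 ^ α * (1 + ‖x‖) ^ (-α)) ^ p :=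
        Real.rpow_le_rpow (decay_pos x).le (decay_le_two_rpow_mul hα x) hp
    _ = (2 ^ α) ^ p * (1 + ‖x‖) ^ (-(α * p)) := by
        rw [Real.mul_rpow (by positivity) (by positivity), ← Real.rpow_mul hx, neg_mul]

lemma inv_two_rpow_le_decay_rpow (hα : 0 ≤ α) (hp : 0 ≤ p) {y : E} (hy : ‖y‖ ≤ 1) :
    (2 ^ p)⁻¹ ≤ decay α y ^ p := by
  have h : (2 : ℝ)⁻¹ ≤ decay α y :=
    inv_anti₀ (by positivity) (by linarith [Real.rpow_le_one (norm_nonneg y) hy hα])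
  rw [← Real.inv_rpow zero_le_two]
  exact Real.rpow_le_rpow (by norm_num) h hp

lemma inv_mul_rpow_neg_le_decay_sub (hα : 0 ≤ α) {y z : E} (hy : ‖y‖ ≤ 1) (hz : 1 ≤ ‖z‖) :
    (1 + 2 ^ α)⁻¹ * ‖z‖ ^ (-α) ≤ decay α (y - z) := by
  have hz0 : 0 < ‖z‖ := by linarith
  have hyz : ‖y - z‖ ^ α ≤ 2 ^ α * ‖z‖ ^ α := by
    rw [← Real.mul_rpow zero_le_two hz0.le]
    exact Real.rpow_le_rpow (norm_nonneg _) (by linarith [norm_sub_le y z]) hα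
  have hzα : 1 ≤ ‖z‖ ^ α := Real.one_le_rpow hz hα
  rw [Real.rpow_neg hz0.le, ← mul_inv, decay]
  exact inv_anti₀ (by positivity) (by nlinarith)

end Pointwise

section Integral

variable {E : Type*} [NormedAddCommGroup E] [NormedSpace ℝ E] [FiniteDimensional ℝ E]
  [MeasurableSpace E] [BorelSpace E] (μ : Measure E) [μ.IsAddHaarMeasure] {α p : ℝ}

lemma integrable_decay_rpow_mul_decay_sub (hα : 0 ≤ α) (hp : 0 ≤ p)
    (hαp : (Module.finrank ℝ E : ℝ) < α * p) (z : E) :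
    Integrable (fun y => decay α y ^ p * decay α (y - z)) μ := by
  refine ((integrable_one_add_norm hαp).const_mul ((2 ^ α) ^ p)).mono
    (by unfold decay; fun_prop) (ae_of_all _ fun y => ?_)
  rw [Real.norm_of_nonneg (decay_rpow_mul_decay_nonneg (p := p) y (y - z)),
    Real.norm_of_nonneg (by positivity)]
  calc decay α y ^ p * decay α (y - z) ≤ decay α y ^ p :=
        mul_le_of_le_one_right (Real.rpow_nonneg (decay_pos y).le p) (decay_le_one (y - z))
    _ ≤ _ := decay_rpow_le hα hp y

theorem exists_pos_mul_rpow_neg_le_integral_decay (hα : 0 ≤ α) (hp : 0 ≤ p)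
    (hαp : (Module.finrank ℝ E : ℝ) < α * p) :
    ∃ c > 0, ∀ z : E, 1 ≤ ‖z‖ →
      c * ‖z‖ ^ (-α) ≤ ∫ y, decay α y ^ p * decay α (y - z) ∂μ := by
  have hball : 0 < μ.real (closedBall 0 1) :=
    ENNReal.toReal_pos (measure_closedBall_pos μ 0 one_pos).ne' measure_closedBall_lt_top.ne
  refine ⟨(2 ^ p)⁻¹ * (1 + 2 ^ α)⁻¹ * μ.real (closedBall 0 1), mul_pos (by positivity) hball,
    fun z hz => ?_⟩
  have hint := integrable_decay_rpow_mul_decay_sub μ hα hp hαp z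
  have hlow : ∀ y ∈ closedBall (0 : E) 1,
      (2 ^ p)⁻¹ * ((1 + 2 ^ α)⁻¹ * ‖z‖ ^ (-α)) ≤ decay α y ^ p * decay α (y - z) := by
    intro y hy
    rw [mem_closedBall_zero_iff] at hy
    exact mul_le_mul (inv_two_rpow_le_decay_rpow hα hp hy)
      (inv_mul_rpow_neg_le_decay_sub hα hy hz) (by positivity)
      (Real.rpow_nonneg (decay_pos y).le p)
  calc (2 ^ p)⁻¹ * (1 + 2 ^ α)⁻¹ * μ.real (closedBall 0 1) * ‖z‖ ^ (-α)
      = (2 ^ p)⁻¹ * ((1 + 2 ^ α)⁻¹ * ‖z‖ ^ (-α)) * μ.real (closedBall 0 1) := by ring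
    _ ≤ ∫ y in closedBall 0 1, decay α y ^ p * decay α (y - z) ∂μ :=
        setIntegral_ge_of_const_le_real measurableSet_closedBall measure_closedBall_lt_top.ne
          hlow hint.integrableOn
    _ ≤ ∫ y, decay α y ^ p * decay α (y - z) ∂μ :=
        setIntegral_le_integral hint (ae_of_all _ fun y => decay_rpow_mul_decay_nonneg y (y - z))

end Integral

theorem stmt6_general (N : ℕ) (s p : ℝ) (hs : 0 < s) (hp : 1 < p)
    (hpN : p * ((N : ℝ) + 2 * s) > N) :
    ∃ c > 0, ∀ z : EuclideanSpace ℝ (Fin N), 2 ≤ ‖z‖ →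
      c * ‖z‖ ^ (-((N : ℝ) + 2 * s)) ≤
        ∫ y, ((1 + ‖y‖ ^ ((N : ℝ) + 2 * s))⁻¹) ^ p *
          (1 + ‖y - z‖ ^ ((N : ℝ) + 2 * s))⁻¹ := by
  have hαp : (Module.finrank ℝ (EuclideanSpace ℝ (Fin N)) : ℝ) < ((N : ℝ) + 2 * s) * p := by
    rw [finrank_euclideanSpace_fin, mul_comm]
    exact hpN
  obtain ⟨c, hc, hbound⟩ :=
    exists_pos_mul_rpow_neg_le_integral_decay volume (by positivity) (by linarith) hαp
  exact ⟨c, hc, fun z hz => hbound z (by linarith)⟩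

/-- Lower bound for the interaction integral: with `f(x) = (1+|x|^{N+2s})⁻¹`,
`∫ f(y)^p f(y−z) dy ≥ c |z|^{−(N+2s)}` for `|z| ≥ 2`. -/
theorem stmt6 (N : ℕ) (hN : 1 ≤ N) (s p : ℝ) (hs : 0 < s) (hp : 1 < p)
    (hpN : p * ((N : ℝ) + 2 * s) > N) :
    ∃ c > 0, ∀ z : EuclideanSpace ℝ (Fin N), 2 ≤ ‖z‖ →
      c * ‖z‖ ^ (-((N : ℝ) + 2 * s)) ≤
        ∫ y, ((1 + ‖y‖ ^ ((N : ℝ) + 2 * s))⁻¹) ^ p *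
          (1 + ‖y - z‖ ^ ((N : ℝ) + 2 * s))⁻¹ :=
  stmt6_general N s p hs hp hpN
end

section
/- Taylor remainder bound for powers (superquadratic case): let p > 2. There exists C > 0 depending only on p such that for all u ≥ 0 and v ∈ ℝ with u + v ≥ 0, | (u+v)^{p+1} − u^{p+1} − (p+1)u^p v − (p(p+1)/2) u^{p−1} v² | ≤ C ( u^{p−2}|v|³ + |v|^{p+1} ). -/
/-! As a function of `s`, the remainder `R(s)` vanishes together with its derivative at `s = 0`,
and `R''(s) = p (p + 1) ((u + s) ^ (p - 1) - u ^ (p - 1))`. By the mean value theorem for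
`t ↦ t ^ (p - 1)`, for `s` between `0` and `v` this is at most
`p (p + 1) (p - 1) (u + |v|) ^ (p - 2) |v| ≤ C (u ^ (p - 2) + |v| ^ (p - 2)) |v|`.
Integrating twice, again by the mean value theorem, gives
`|R(v)| ≤ C (u ^ (p - 2) + |v| ^ (p - 2)) |v| ^ 3`. -/

open Real Set

lemma add_rpow_le_two_rpow_mul_rpow_add_rpow {a b r : ℝ} (ha : 0 ≤ a) (hb : 0 ≤ b)
    (hr : 0 ≤ r) : (a + b) ^ r ≤ 2 ^ r * (a ^ r + b ^ r) := calc
  (a + b) ^ r ≤ (2 * max a b) ^ r := by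
    rw [two_mul]; gcongr <;> simp
  _ = 2 ^ r * max a b ^ r := mul_rpow zero_le_two (le_max_of_le_left ha)
  _ ≤ 2 ^ r * (a ^ r + b ^ r) := by
    gcongr
    rcases max_cases a b with ⟨h, -⟩ | ⟨h, -⟩ <;> rw [h]
    · exact le_add_of_nonneg_right (rpow_nonneg hb r)
    · exact le_add_of_nonneg_left (rpow_nonneg ha r)

lemma abs_rpow_sub_rpow_le {q x y : ℝ} (hq : 1 ≤ q) (hx : 0 ≤ x) (hy : 0 ≤ y) :
    |x ^ q - y ^ q| ≤ q * max x y ^ (q - 1) * |x - y| := by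
  have bound : ∀ z ∈ uIcc y x, ‖q * z ^ (q - 1)‖ ≤ q * max x y ^ (q - 1) := by
    intro z hz
    have hz0 : 0 ≤ z := le_trans (le_min hy hx) hz.1
    rw [norm_mul, norm_of_nonneg (by linarith), norm_of_nonneg (rpow_nonneg hz0 _)]
    gcongr
    exact hz.2.trans (by rw [max_comm])
  simpa only [norm_eq_abs] using (convex_uIcc y x).norm_image_sub_le_of_norm_hasDerivWithin_le
    (fun z _ => (hasDerivAt_rpow_const (Or.inr hq)).hasDerivWithinAt) bound
    left_mem_uIcc right_mem_uIcc

lemma abs_rpow_add_sub_rpow_le {q u s w : ℝ} (hq : 1 ≤ q) (hu : 0 ≤ u) (hus : 0 ≤ u + s)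
    (hsw : |s| ≤ w) :
    |(u + s) ^ q - u ^ q| ≤ q * 2 ^ (q - 1) * (u ^ (q - 1) + w ^ (q - 1)) * w := by
  have hw : 0 ≤ w := (abs_nonneg s).trans hsw
  have hmax : max (u + s) u ≤ u + w :=
    max_le (by linarith [le_abs_self s]) (le_add_of_nonneg_right hw)
  calc |(u + s) ^ q - u ^ q| ≤ q * max (u + s) u ^ (q - 1) * |u + s - u| :=
        abs_rpow_sub_rpow_le hq hus hu
    _ ≤ q * (u + w) ^ (q - 1) * w := by
        rw [add_sub_cancel_left]
        gcongr
    _ ≤ q * (2 ^ (q - 1) * (u ^ (q - 1) + w ^ (q - 1))) * w := by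
        gcongr
        exact add_rpow_le_two_rpow_mul_rpow_add_rpow hu hw (by linarith)
    _ = q * 2 ^ (q - 1) * (u ^ (q - 1) + w ^ (q - 1)) * w := by ring

lemma abs_le_mul_abs_sub_of_hasDerivAt {f f' : ℝ → ℝ} {a x M : ℝ} (hfa : f a = 0)
    (hf : ∀ s, HasDerivAt f (f' s) s) (hM : ∀ s ∈ uIcc a x, |f' s| ≤ M) :
    |f x| ≤ M * |x - a| := by
  simpa only [hfa, sub_zero, norm_eq_abs] using
    (convex_uIcc a x).norm_image_sub_le_of_norm_hasDerivWithin_le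
      (fun s _ => (hf s).hasDerivWithinAt) hM left_mem_uIcc right_mem_uIcc

lemma abs_le_mul_sq_of_hasDerivAt {f f' f'' : ℝ → ℝ} {a x M : ℝ} (hfa : f a = 0)
    (hf'a : f' a = 0) (hf : ∀ s, HasDerivAt f (f' s) s) (hf' : ∀ s, HasDerivAt f' (f'' s) s)
    (hM : ∀ s ∈ uIcc a x, |f'' s| ≤ M) :
    |f x| ≤ M * (x - a) ^ 2 := by
  have hM0 : 0 ≤ M := (abs_nonneg _).trans (hM a left_mem_uIcc)
  have hf'bound : ∀ s ∈ uIcc a x, |f' s| ≤ M * |x - a| := fun s hs =>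
    (abs_le_mul_abs_sub_of_hasDerivAt hf'a hf' fun t ht =>
      hM t (uIcc_subset_uIcc_left hs ht)).trans
      (mul_le_mul_of_nonneg_left (abs_sub_left_of_mem_uIcc hs) hM0)
  calc |f x| ≤ M * |x - a| * |x - a| := abs_le_mul_abs_sub_of_hasDerivAt hfa hf hf'bound
    _ = M * (x - a) ^ 2 := by rw [mul_assoc, ← sq, sq_abs]

lemma hasDerivAt_add_rpow {u q : ℝ} (hq : 1 ≤ q) (s : ℝ) :
    HasDerivAt (fun t => (u + t) ^ q) (q * (u + s) ^ (q - 1)) s :=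
  (((hasDerivAt_id s).const_add u).rpow_const (Or.inr hq)).congr_deriv (by simp)

lemma hasDerivAt_rpow_taylorRemainder {u q : ℝ} (hq : 0 ≤ q) (s : ℝ) :
    HasDerivAt
      (fun t => (u + t) ^ (q + 1) - u ^ (q + 1) - (q + 1) * u ^ q * t -
        (q * (q + 1) / 2) * u ^ (q - 1) * t ^ 2)
      ((q + 1) * (u + s) ^ q - (q + 1) * u ^ q - q * (q + 1) * u ^ (q - 1) * s) s :=
  ((((hasDerivAt_add_rpow (u := u) (by linarith : 1 ≤ q + 1) s).sub_const
    (u ^ (q + 1))).sub ((hasDerivAt_id s).const_mul ((q + 1) * u ^ q))).sub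
    ((hasDerivAt_pow 2 s).const_mul ((q * (q + 1) / 2) * u ^ (q - 1)))).congr_deriv
    (by simp only [add_sub_cancel_right]; ring)

lemma hasDerivAt_rpow_taylorRemainder_deriv {u q : ℝ} (hq : 1 ≤ q) (s : ℝ) :
    HasDerivAt
      (fun t => (q + 1) * (u + t) ^ q - (q + 1) * u ^ q - q * (q + 1) * u ^ (q - 1) * t)
      (q * (q + 1) * ((u + s) ^ (q - 1) - u ^ (q - 1))) s :=
  ((((hasDerivAt_add_rpow (u := u) hq s).const_mul (q + 1)).sub_const
    ((q + 1) * u ^ q)).sub ((hasDerivAt_id s).const_mul (q * (q + 1) * u ^ (q - 1)))).congr_deriv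
    (by ring)

/-- Taylor remainder bound for powers, superquadratic case `p > 2`. -/
theorem stmt8 (p : ℝ) (hp : 2 < p) :
    ∃ C > 0, ∀ u v : ℝ, 0 ≤ u → 0 ≤ u + v →
      |(u + v) ^ (p + 1) - u ^ (p + 1) - (p + 1) * u ^ p * v -
          (p * (p + 1) / 2) * u ^ (p - 1) * v ^ 2| ≤
        C * (u ^ (p - 2) * |v| ^ 3 + |v| ^ (p + 1)) := by
  refine ⟨p * (p + 1) * ((p - 1) * 2 ^ (p - 2)), ?_, fun u v hu huv => ?_⟩
  · exact mul_pos (mul_pos (by linarith) (by linarith)) (mul_pos (by linarith) (by positivity))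
  have hsecond : ∀ s ∈ uIcc 0 v, |p * (p + 1) * ((u + s) ^ (p - 1) - u ^ (p - 1))| ≤
      p * (p + 1) * ((p - 1) * 2 ^ (p - 2) * (u ^ (p - 2) + |v| ^ (p - 2)) * |v|) := by
    intro s hs
    have hus : 0 ≤ u + s := by rcases mem_uIcc.mp hs with h | h <;> linarith [h.1]
    have hsv : |s| ≤ |v| := by simpa using abs_sub_left_of_mem_uIcc hs
    rw [abs_mul, abs_of_nonneg (by nlinarith)]
    gcongr
    simpa only [show p - 1 - 1 = p - 2 by ring] using
      abs_rpow_add_sub_rpow_le (by linarith : 1 ≤ p - 1) hu hus hsv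
  have hv : |v| ^ (p - 2) * |v| * v ^ 2 = |v| ^ (p + 1) := by
    rw [← sq_abs, mul_assoc, ← pow_succ', ← rpow_natCast,
      ← rpow_add' (abs_nonneg v) (by push_cast; linarith)]
    norm_num [show p - 2 + 3 = p + 1 by ring]
  calc _ ≤ _ * (v - 0) ^ 2 := abs_le_mul_sq_of_hasDerivAt (by simp) (by simp)
        (hasDerivAt_rpow_taylorRemainder (by linarith))
        (hasDerivAt_rpow_taylorRemainder_deriv (by linarith)) hsecond
    _ = _ := by rw [sub_zero, ← hv, ← sq_abs v]; ring
end

section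
/- Hölder potential perturbation estimate: let V : ℝ^N → ℝ be bounded and α-Hölder continuous on B_{r₀}(y₀) with 0 < α < (N+4s)/2, and let U satisfy |U(x)| ≤ C/(1+|x|^{N+2s}). Then there is C' > 0 such that for all ε ∈ (0,1): ( ∫_{ℝ^N} ( V(εy + y₀) − V(y₀) )² U(y)² dy )^{1/2} ≤ C' ε^{α}. -/
open MeasureTheory

-- auxiliary: key pointwise rpow inequality
lemma aux_pow_bound (p t : ℝ) (hp : 0 ≤ p) (ht : 0 ≤ t) :
    (1 + t) ^ p ≤ 2 ^ p * (1 + t ^ p) := by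
  have h1 : (1 + t) ≤ 2 * max 1 t := by
    rcases le_total t 1 with h | h
    · simp [max_eq_left h]; linarith
    · simp [max_eq_right h]; linarith
  have h2 : (1 + t) ^ p ≤ (2 * max 1 t) ^ p :=
    Real.rpow_le_rpow (by linarith) h1 hp
  have h3 : (2 * max 1 t) ^ p = 2 ^ p * (max 1 t) ^ p :=
    Real.mul_rpow (by norm_num) (le_max_of_le_left zero_le_one)
  have h4 : (max 1 t) ^ p ≤ 1 + t ^ p := by
    rcases le_total t 1 with h | h
    · rw [max_eq_left h, Real.one_rpow]
      have : (0:ℝ) ≤ t ^ p := Real.rpow_nonneg ht p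
      linarith
    · rw [max_eq_right h]
      have : (0:ℝ) ≤ 1 := zero_le_one
      linarith [le_add_of_nonneg_left (a := t ^ p) zero_le_one]
  calc (1 + t) ^ p ≤ 2 ^ p * (max 1 t) ^ p := by rw [← h3]; exact h2
    _ ≤ 2 ^ p * (1 + t ^ p) := by
        have : (0:ℝ) ≤ 2 ^ p := Real.rpow_nonneg (by norm_num) p
        nlinarith

lemma aux_decay (p α C t : ℝ) (hp : 0 < p) (hα : 0 ≤ α) (ht : 0 ≤ t) (hC : 0 ≤ C) :
    t ^ (2*α) * (C / (1 + t ^ p)) ^ 2 ≤ C ^ 2 * 4 ^ p * (1 + t) ^ (-(2*p - 2*α)) := by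
  have hA : (0:ℝ) < 1 + t := by linarith
  have hBnn : (0:ℝ) ≤ t ^ p := Real.rpow_nonneg ht p
  have hB : (0:ℝ) < 1 + t ^ p := by linarith
  have key : (1 + t) ^ (2*p) ≤ 4 ^ p * (1 + t ^ p) ^ 2 := by
    have e1 : (1 + t) ^ (2*p) = ((1 + t) ^ p) ^ 2 := by
      rw [mul_comm, Real.rpow_mul hA.le, Real.rpow_two]
    have e2 : ((1 + t) ^ p) ^ 2 ≤ (2 ^ p * (1 + t ^ p)) ^ 2 :=
      pow_le_pow_left₀ (Real.rpow_nonneg hA.le p) (aux_pow_bound p t (by linarith [hp.le]) ht) 2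
    have e3 : ((2:ℝ) ^ p * (1 + t ^ p)) ^ 2 = 4 ^ p * (1 + t ^ p) ^ 2 := by
      rw [mul_pow]
      congr 1
      rw [pow_two, ← Real.mul_rpow (by norm_num : (0:ℝ) ≤ 2) (by norm_num : (0:ℝ) ≤ 2)]
      norm_num
    rw [e1]; rw [e3] at e2; exact e2
  have ht2a : t ^ (2*α) ≤ (1 + t) ^ (2*α) :=
    Real.rpow_le_rpow ht (by linarith) (by linarith)
  have hAneg : (1 + t) ^ (-(2*p - 2*α)) = (1 + t) ^ (2*α) / (1 + t) ^ (2*p) := by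
    rw [← Real.rpow_sub hA]; ring_nf
  rw [hAneg, div_pow, mul_div_assoc']
  rw [mul_div_assoc']
  rw [div_le_div_iff₀ (by positivity) (by positivity)]
  have h1 : t ^ (2*α) * (1 + t) ^ (2*p) ≤ (1 + t) ^ (2*α) * (4 ^ p * (1 + t ^ p) ^ 2) :=
    mul_le_mul ht2a key (by positivity) (by positivity)
  nlinarith [sq_nonneg C, Real.rpow_nonneg ht (2*α), Real.rpow_nonneg hA.le (2*α),
    Real.rpow_nonneg hA.le (2*p), sq_nonneg (1 + t ^ p), Real.rpow_nonneg (by norm_num : (0:ℝ) ≤ 4) p]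

set_option maxHeartbeats 1000000 in
/-- Hölder potential perturbation estimate:
`(∫ (V(εy+y₀) − V(y₀))² U(y)² dy)^{1/2} ≤ C' ε^α` for `ε ∈ (0,1)`. -/
theorem stmt14 (N : ℕ) (hN : 1 ≤ N) (s α r₀ : ℝ) (hs : 0 < s) (hα : 0 < α)
    (hα2 : α < ((N : ℝ) + 4 * s) / 2) (hr₀ : 0 < r₀)
    (V : EuclideanSpace ℝ (Fin N) → ℝ) (hVmeas : Measurable V)
    (y₀ : EuclideanSpace ℝ (Fin N))
    (M : ℝ) (hVbd : ∀ x, |V x| ≤ M)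
    (L : ℝ) (hL : 0 < L)
    (hVhol : ∀ x ∈ Metric.ball y₀ r₀, ∀ x' ∈ Metric.ball y₀ r₀,
      |V x - V x'| ≤ L * ‖x - x'‖ ^ α)
    (U : EuclideanSpace ℝ (Fin N) → ℝ) (hUmeas : Measurable U)
    (C : ℝ) (hC : 0 < C)
    (hU : ∀ x, |U x| ≤ C / (1 + ‖x‖ ^ ((N : ℝ) + 2 * s))) :
    ∃ C' > 0, ∀ ε ∈ Set.Ioo (0 : ℝ) 1,
      (∫ y, (V (ε • y + y₀) - V y₀) ^ 2 * (U y) ^ 2) ^ (1 / 2 : ℝ) ≤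
        C' * ε ^ α := by
  set p : ℝ := (N : ℝ) + 2 * s with hpdef
  have hp : 0 < p := by
    have : (1:ℝ) ≤ (N:ℝ) := by exact_mod_cast hN
    simp only [hpdef]; linarith
  have hr : ((Module.finrank ℝ (EuclideanSpace ℝ (Fin N)) : ℕ) : ℝ) < 2*p - 2*α := by
    rw [finrank_euclideanSpace_fin]
    simp only [hpdef]; linarith
  have hint : Integrable
      (fun y : EuclideanSpace ℝ (Fin N) ↦ C^2 * 4^p * (1 + ‖y‖) ^ (-(2*p - 2*α))) :=
    (integrable_one_add_norm hr).const_mul _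
  have hgmeas : AEStronglyMeasurable
      (fun y : EuclideanSpace ℝ (Fin N) ↦ ‖y‖ ^ (2*α) * (U y)^2) := by
    apply Measurable.aestronglyMeasurable
    fun_prop
  have hgint : Integrable (fun y : EuclideanSpace ℝ (Fin N) ↦ ‖y‖ ^ (2*α) * (U y)^2) := by
    refine hint.mono' hgmeas (Filter.Eventually.of_forall fun y ↦ ?_)
    have h1 : (U y)^2 ≤ (C / (1 + ‖y‖ ^ p))^2 := by
      rw [← sq_abs (U y)]
      exact pow_le_pow_left₀ (abs_nonneg _) (hU y) 2
    have h2 : ‖y‖ ^ (2*α) * (U y)^2 ≤ ‖y‖ ^ (2*α) * (C / (1 + ‖y‖ ^ p))^2 :=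
      mul_le_mul_of_nonneg_left h1 (Real.rpow_nonneg (norm_nonneg y) _)
    have h3 := aux_decay p α C ‖y‖ hp hα.le (norm_nonneg y) hC.le
    rw [Real.norm_eq_abs, abs_of_nonneg (by positivity)]
    linarith
  set I : ℝ := ∫ y : EuclideanSpace ℝ (Fin N), ‖y‖ ^ (2*α) * (U y)^2 with hIdef
  have hI0 : 0 ≤ I := integral_nonneg fun y ↦ by positivity
  have hM : 0 ≤ M := le_trans (abs_nonneg _) (hVbd y₀)
  set K : ℝ := L^2 + (2*M/r₀^α)^2 + 1 with hKdef
  have hK : 0 < K := by positivity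
  have hKL : L^2 ≤ K := by simp only [hKdef]; nlinarith [sq_nonneg (2*M/r₀^α)]
  have hKM : (2*M/r₀^α)^2 ≤ K := by simp only [hKdef]; nlinarith [sq_nonneg L]
  refine ⟨(K*I)^(1/2:ℝ) + 1, by positivity, ?_⟩
  rintro ε ⟨hε0, hε1⟩
  have hε2α : ε ^ (2*α) = (ε ^ α)^2 := by
    rw [mul_comm, Real.rpow_mul hε0.le, Real.rpow_two]
  have hεα : 0 ≤ ε ^ α := Real.rpow_nonneg hε0.le α
  have hpt : ∀ y : EuclideanSpace ℝ (Fin N),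
      (V (ε • y + y₀) - V y₀) ^ 2 * (U y) ^ 2 ≤
        (K * ε ^ (2*α)) * (‖y‖ ^ (2*α) * (U y)^2) := by
    intro y
    have hy2α : ‖y‖ ^ (2*α) = (‖y‖ ^ α)^2 := by
      rw [mul_comm, Real.rpow_mul (norm_nonneg y), Real.rpow_two]
    have hyα : 0 ≤ ‖y‖ ^ α := Real.rpow_nonneg (norm_nonneg y) α
    have hnorm : ‖ε • y + y₀ - y₀‖ = ε * ‖y‖ := by
      rw [add_sub_cancel_right, norm_smul, Real.norm_eq_abs, abs_of_pos hε0]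
    have hkey : (V (ε • y + y₀) - V y₀) ^ 2 ≤ K * ε ^ (2*α) * ‖y‖ ^ (2*α) := by
      by_cases hcase : ε * ‖y‖ < r₀
      · have hx : ε • y + y₀ ∈ Metric.ball y₀ r₀ := by
          rw [Metric.mem_ball, dist_eq_norm, hnorm]
          exact hcase
        have habs := hVhol _ hx _ (Metric.mem_ball_self hr₀)
        rw [hnorm] at habs
        have hmr : (ε * ‖y‖) ^ α = ε ^ α * ‖y‖ ^ α :=
          Real.mul_rpow hε0.le (norm_nonneg y)
        rw [hmr] at habs
        calc (V (ε • y + y₀) - V y₀) ^ 2 = |V (ε • y + y₀) - V y₀| ^ 2 := (sq_abs _).symm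
          _ ≤ (L * (ε ^ α * ‖y‖ ^ α)) ^ 2 := pow_le_pow_left₀ (abs_nonneg _) habs 2
          _ = L^2 * ((ε ^ α)^2 * (‖y‖ ^ α)^2) := by ring
          _ ≤ K * ((ε ^ α)^2 * (‖y‖ ^ α)^2) :=
            mul_le_mul_of_nonneg_right hKL (by positivity)
          _ = K * ε ^ (2*α) * ‖y‖ ^ (2*α) := by rw [hε2α, hy2α]; ring
      · push_neg at hcase
        have h1 : (1:ℝ) ≤ (ε * ‖y‖ / r₀) ^ α := by
          calc (1:ℝ) = 1 ^ α := (Real.one_rpow α).symm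
            _ ≤ (ε * ‖y‖ / r₀) ^ α := Real.rpow_le_rpow zero_le_one
                ((le_div_iff₀ hr₀).mpr (by linarith)) hα.le
        have hdr : (ε * ‖y‖ / r₀) ^ α = ε ^ α * ‖y‖ ^ α / r₀ ^ α := by
          rw [Real.div_rpow (by positivity) hr₀.le, Real.mul_rpow hε0.le (norm_nonneg y)]
        have habs : |V (ε • y + y₀) - V y₀| ≤ 2 * M := by
          calc |V (ε • y + y₀) - V y₀| ≤ |V (ε • y + y₀)| + |V y₀| := abs_sub _ _
            _ ≤ 2 * M := by linarith [hVbd (ε • y + y₀), hVbd y₀]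
        calc (V (ε • y + y₀) - V y₀) ^ 2 = |V (ε • y + y₀) - V y₀| ^ 2 := (sq_abs _).symm
          _ ≤ (2*M) ^ 2 := pow_le_pow_left₀ (abs_nonneg _) habs 2
          _ ≤ (2*M) ^ 2 * ((ε * ‖y‖ / r₀) ^ α) ^ 2 := by nlinarith [sq_nonneg (2*M), sq_nonneg ((ε * ‖y‖ / r₀) ^ α - 1), sq_nonneg ((ε * ‖y‖ / r₀) ^ α + 1)]
          _ = (2*M/r₀^α)^2 * ((ε ^ α)^2 * (‖y‖ ^ α)^2) := by rw [hdr]; ring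
          _ ≤ K * ((ε ^ α)^2 * (‖y‖ ^ α)^2) :=
            mul_le_mul_of_nonneg_right hKM (by positivity)
          _ = K * ε ^ (2*α) * ‖y‖ ^ (2*α) := by rw [hε2α, hy2α]; ring
    calc (V (ε • y + y₀) - V y₀) ^ 2 * (U y) ^ 2
        ≤ (K * ε ^ (2*α) * ‖y‖ ^ (2*α)) * (U y)^2 :=
          mul_le_mul_of_nonneg_right hkey (sq_nonneg _)
      _ = (K * ε ^ (2*α)) * (‖y‖ ^ (2*α) * (U y)^2) := by ring
  have hle : (∫ y, (V (ε • y + y₀) - V y₀) ^ 2 * (U y) ^ 2) ≤ K * ε ^ (2*α) * I := by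
    calc (∫ y, (V (ε • y + y₀) - V y₀) ^ 2 * (U y) ^ 2)
        ≤ ∫ y : EuclideanSpace ℝ (Fin N), (K * ε ^ (2*α)) * (‖y‖ ^ (2*α) * (U y)^2) :=
          integral_mono_of_nonneg (Filter.Eventually.of_forall fun y ↦ by positivity)
            (hgint.const_mul _) (Filter.Eventually.of_forall hpt)
      _ = K * ε ^ (2*α) * I := by rw [integral_const_mul]
  have h0 : (0:ℝ) ≤ ∫ y, (V (ε • y + y₀) - V y₀) ^ 2 * (U y) ^ 2 :=
    integral_nonneg fun y ↦ by positivity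
  calc (∫ y, (V (ε • y + y₀) - V y₀) ^ 2 * (U y) ^ 2) ^ (1/2:ℝ)
      ≤ (K * ε ^ (2*α) * I) ^ (1/2:ℝ) := Real.rpow_le_rpow h0 hle (by norm_num)
    _ = (K * I) ^ (1/2:ℝ) * ε ^ α := by
        rw [show K * ε ^ (2*α) * I = (K*I) * ε ^ (2*α) by ring,
          Real.mul_rpow (by positivity) (Real.rpow_nonneg hε0.le _),
          ← Real.rpow_mul hε0.le]
        congr 1
        ring
    _ ≤ ((K * I) ^ (1/2:ℝ) + 1) * ε ^ α := by nlinarith [hεα]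
end
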